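/- arXiv:2105.11986 — 3 statements merged into one kernel-verified Lean document; each statement's English description precedes it below -/
import Mathlib

section
/- Let π: (X, (1/r)D) → B be a flat projective family over a projective normal variety B as in the setup for the CM line bundle, with relatively ample polarization L. Suppose c > 1 is rational and L = K_{X/B} + (c/r)D. Then the CM line bundle satisfies λ_{CM,c} = π_*(L^{d+1}). -/
/-! Substituting `λ_d` and `λ_{d+1}` into `M₁ − (c/r)·M₂` leaves
`(2a₁ − (c/r)ã₀)/a₀ · π_*(L^{d+1}) + (d+1)·π_*(L^d·(K_{X/B} + (c/r)D))`. Since `L = K_{X/B} + (c/r)D`,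
the second term is `(d+1)·π_*(L^{d+1})`, and on a fiber `2a₁ − (c/r)ã₀ = −L_t^d/(d−1)! = −d·a₀`,
so the total coefficient is `−d + d + 1 = 1`. -/

lemma cm_combination_eq_smul {K M : Type*} [Field K] [CharZero K] [AddCommGroup M] [Module K M]
    (d q a0 a1 ta0 : K) (lam κ δ : M) (hL : κ + q • δ = lam) :
    ((2 * a1 / a0 + d * (d + 1)) • lam - (2 * (d + 1)) • ((d / 2) • lam + (1 / 2 : K) • (-κ)))
        - q • ((ta0 / a0) • lam - (d + 1) • δ)
      = (2 * a1 / a0 - q * (ta0 / a0) + d + 1) • lam := by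
  obtain rfl : κ = lam - q • δ := eq_sub_of_add_eq hL
  match_scalars <;> ring

lemma cm_fiber_coeff_eq_neg {K : Type*} [Field K] [CharZero K] {d : ℕ} (hd : 1 ≤ d)
    {q Ltd KLt DLt : K} (hLtd : Ltd ≠ 0) (hLt : KLt + q * DLt = Ltd) :
    2 * (-KLt / (2 * ((d - 1).factorial : K))) / (Ltd / (d.factorial : K))
        - q * ((DLt / ((d - 1).factorial : K)) / (Ltd / (d.factorial : K))) = -d := by
  have hfact : (d.factorial : K) = d * ((d - 1).factorial : K) := by
    exact_mod_cast (Nat.mul_factorial_pred (by omega)).symm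
  have hd0 : (d : K) ≠ 0 := by exact_mod_cast (show d ≠ 0 by omega)
  have hfact0 : ((d - 1).factorial : K) ≠ 0 := by exact_mod_cast Nat.factorial_ne_zero _
  rw [hfact]
  field_simp
  linear_combination -hLt

theorem stmt_3_general
    (PicB : Type*) [AddCommGroup PicB] [Module ℚ PicB]
    (d : ℕ) (hd : 1 ≤ d) (r c : ℚ)
    (pLd1 pLdK pLdD : PicB)   -- π_*(L^{d+1}), π_*(L^d·K_{X/B}), π_*(L^d·D)
    (Ltd KLt DLt : ℚ)         -- L_t^d, K_{X_t}·L_t^{d−1}, D_t·L_t^{d−1}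
    (hLtd : 0 < Ltd)
    (a0 a1 ta0 : ℚ)
    (ha0 : a0 = Ltd / (d.factorial : ℚ))
    (ha1 : a1 = -KLt / (2 * ((d - 1).factorial : ℚ)))
    (hta0 : ta0 = DLt / ((d - 1).factorial : ℚ))
    (lam_d1 lam_d tlam_d M1 M2 lamCM : PicB)
    (hlam_d1 : lam_d1 = pLd1)
    (hlam_d : lam_d = ((d : ℚ) / 2) • pLd1 + (1 / 2 : ℚ) • (-pLdK))
    (htlam_d : tlam_d = pLdD)
    (hM1 : M1 = (2 * a1 / a0 + (d : ℚ) * ((d : ℚ) + 1)) • lam_d1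
                  - (2 * ((d : ℚ) + 1)) • lam_d)
    (hM2 : M2 = (ta0 / a0) • lam_d1 - ((d : ℚ) + 1) • tlam_d)
    (hlamCM : lamCM = M1 - (c / r) • M2)
    -- L = K_{X/B} + (c/r)D, so L^d·L = L^{d+1} on X and on the fibers:
    (hL : pLdK + (c / r) • pLdD = pLd1)
    (hLt : KLt + (c / r) * DLt = Ltd) :
    lamCM = pLd1 := by
  subst hlamCM hM1 hM2 hlam_d1 hlam_d htlam_d ha0 ha1 hta0
  rw [cm_combination_eq_smul _ _ _ _ _ _ _ _ hL, cm_fiber_coeff_eq_neg hd hLtd.ne' hLt]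
  simp

/-- In the CM line bundle setup over a projective normal base `B`
(`π : X → B` flat projective of relative dimension `d`, `D` a Weil divisor with
`D ∼_{ℚ,B} −r K_{X/B}`, `L` relatively ample), with the Knudsen–Mumford identifications
`λ_{d+1} = π_*(L^{d+1})`, `λ_d = (d/2)π_*(L^{d+1}) + (1/2)π_*(−K_{X/B}·L^d)`,
`λ̃_d = π_*(L^d·D)` and the fiber constants `a₀ = L_t^d/d!`,
`a₁ = −K_{X_t}·L_t^{d−1}/(2(d−1)!)`, `ã₀ = L_t^{d−1}·D_t/(d−1)!`, set
`M₁ = (2a₁/a₀ + d(d+1))·λ_{d+1} − 2(d+1)·λ_d`, `M₂ = (ã₀/a₀)·λ_{d+1} − (d+1)·λ̃_d` and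
`λ_{CM,c} = M₁ − (c/r)·M₂`.  If `c > 1` and `L = K_{X/B} + (c/r)D`, then
`λ_{CM,c} = π_*(L^{d+1})`. -/
theorem stmt_3
    (SetupIsFlatProjectiveFamily BIsProjectiveNormal DIsWeilDivRelEquivMinusrK
      LIsRelativelyAmple : Prop)
    (hsetup : SetupIsFlatProjectiveFamily) (hB : BIsProjectiveNormal)
    (hD : DIsWeilDivRelEquivMinusrK) (hLa : LIsRelativelyAmple)
    (PicB : Type*) [AddCommGroup PicB] [Module ℚ PicB]
    (d : ℕ) (hd : 1 ≤ d) (r c : ℚ) (hr : 1 < r) (hc : 1 < c)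
    (pLd1 pLdK pLdD : PicB)   -- π_*(L^{d+1}), π_*(L^d·K_{X/B}), π_*(L^d·D)
    (Ltd KLt DLt : ℚ)         -- L_t^d, K_{X_t}·L_t^{d−1}, D_t·L_t^{d−1}
    (hLtd : 0 < Ltd)
    (a0 a1 ta0 : ℚ)
    (ha0 : a0 = Ltd / (d.factorial : ℚ))
    (ha1 : a1 = -KLt / (2 * ((d - 1).factorial : ℚ)))
    (hta0 : ta0 = DLt / ((d - 1).factorial : ℚ))
    (lam_d1 lam_d tlam_d M1 M2 lamCM : PicB)
    (hlam_d1 : lam_d1 = pLd1)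
    (hlam_d : lam_d = ((d : ℚ) / 2) • pLd1 + (1 / 2 : ℚ) • (-pLdK))
    (htlam_d : tlam_d = pLdD)
    (hM1 : M1 = (2 * a1 / a0 + (d : ℚ) * ((d : ℚ) + 1)) • lam_d1
                  - (2 * ((d : ℚ) + 1)) • lam_d)
    (hM2 : M2 = (ta0 / a0) • lam_d1 - ((d : ℚ) + 1) • tlam_d)
    (hlamCM : lamCM = M1 - (c / r) • M2)
    -- L = K_{X/B} + (c/r)D, so L^d·L = L^{d+1} on X and on the fibers:
    (hL : pLdK + (c / r) • pLdD = pLd1)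
    (hLt : KLt + (c / r) * DLt = Ltd) :
    lamCM = pLd1 :=
  stmt_3_general PicB d hd r c pLd1 pLdK pLdD Ltd KLt DLt hLtd a0 a1 ta0 ha0 ha1 hta0 lam_d1 lam_d
    tlam_d M1 M2 lamCM hlam_d1 hlam_d htlam_d hM1 hM2 hlamCM hL hLt
end

section
/- Let π: X → C be a flat projective family of relative dimension d over a smooth projective curve, D a Weil divisor on X with D ∼_{Q,C} −rK_{X/C}, ε > 0 rational, and set L := (1/ε)(K_{X/C} + ((1+ε)/r)D) + π*H for some divisor H on C. Assume K_{X/C} + ((1+ε)/r)D is nef. Then the degree of the CM line bundle λ_{CM,1+ε} on C equals (1/ε^d)·(K_{X/C} + ((1+ε)/r)D)^{d+1} ≥ 0; in particular λ_{CM,1+ε} has nonnegative degree. -/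
private lemma binom_sq_zero {A : Type*} [CommRing A] [Algebra ℝ A] (a F : A)
    (hF : F * F = 0) : ∀ n : ℕ, 1 ≤ n → (a + F) ^ n = a ^ n + (n : ℝ) • (a ^ (n - 1) * F) := by
  intro n hn
  induction n with
  | zero => omega
  | succ m ih =>
    rcases Nat.eq_or_lt_of_le hn with h | h
    · simp [← h]
    · have hm : 1 ≤ m := by omega
      have hm1 : m - 1 + 1 = m := Nat.sub_add_cancel hm
      rw [pow_succ, ih hm]
      simp only [add_mul, smul_mul_assoc, mul_add, smul_add]
      rw [show a ^ (m - 1) * F * F = 0 from by rw [mul_assoc, hF, mul_zero], smul_zero,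
        add_zero]
      rw [show a ^ (m - 1) * F * a = a ^ m * F from by rw [mul_right_comm, ← pow_succ, hm1]]
      rw [← pow_succ]
      push_cast
      rw [add_smul, one_smul]
      abel

private lemma key {A : Type*} [CommRing A] [Algebra ℝ A] (d : ℕ) (hd : 1 ≤ d) (c ε : ℝ)
    (hcε : ε * c = 1) (N F : A) (hF : F * F = 0) :
    ((d : ℝ) + 1) • ((c • N + F) ^ d * N) - ((d : ℝ) * ε) • (c • N + F) ^ (d + 1)
      = c ^ d • N ^ (d + 1) := by
  have h1 := binom_sq_zero (c • N) F hF d hd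
  have h2 := binom_sq_zero (c • N) F hF (d + 1) (by omega)
  have hd1 : d + 1 - 1 = d := rfl
  rw [h1, h2, hd1]
  have e1 : N ^ (d - 1) * N = N ^ d := by
    rw [← pow_succ, Nat.sub_add_cancel hd]
  have hc : c ^ d = c ^ (d - 1) * c := by
    rw [← pow_succ, Nat.sub_add_cancel hd]
  have hp : c ^ (d + 1) = c ^ d * c := pow_succ c d
  simp only [smul_pow, add_mul, smul_mul_assoc]
  rw [show N ^ (d - 1) * F * N = N ^ d * F from by rw [mul_right_comm, e1],
    show N ^ d * N = N ^ (d + 1) from (pow_succ N d).symm]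
  rw [hp]
  match_scalars
  · push_cast; linear_combination (-(d : ℝ) * c ^ d) * hcε
  · push_cast
    rw [hc]
    linear_combination (-(((d : ℝ) + 1) * (d : ℝ) * c ^ (d - 1))) * hcε

/-- Let `π : X → C` be a flat projective family of relative dimension `d` over
a smooth projective curve, `D` a Weil divisor with `D ∼_{ℚ,C} −rK_{X/C}`, `ε > 0` rational, and
`L = (1/ε)(K_{X/C} + ((1+ε)/r)D) + π*H`.  If `N := K_{X/C} + ((1+ε)/r)D` is nef, then
`deg λ_{CM,1+ε} = (d+1)·L^d·N − [d·N_t·L_t^{d−1}/L_t^d]·L^{d+1} = (1/ε^d)·N^{d+1} ≥ 0`.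
The numerical intersection ring of `X` is modelled by a commutative ℝ-algebra `A` with a linear
degree functional `deg` on `(d+1)`-fold products; `F = π*H` satisfies `F·F = 0`, and on fibers
`L_t = (1/ε)N_t`, so `L_t^d = ε^{−d}·N_t^d` and `N_t·L_t^{d−1} = ε^{−(d−1)}·N_t^d`. -/
theorem stmt_7
    (SetupIsFlatProjectiveFamilyOverCurve DIsWeilDivRelEquivMinusrK : Prop)
    (hsetup : SetupIsFlatProjectiveFamilyOverCurve) (hD : DIsWeilDivRelEquivMinusrK)
    (d : ℕ) (hd : 1 ≤ d) (r ε : ℝ) (hr : 1 < r) (hε : 0 < ε)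
    (A : Type*) [CommRing A] [Algebra ℝ A]
    (deg : A →ₗ[ℝ] ℝ)      -- degree of (d+1)-dimensional intersection classes on X
    (N F L : A)            -- N = K_{X/C}+((1+ε)/r)D, F = π*H, L the polarization
    (hL : L = ε⁻¹ • N + F)
    (hF : F * F = 0)
    (Ntd Ltd NLt : ℝ)      -- fiber intersection numbers N_t^d, L_t^d, N_t·L_t^{d−1}
    (hLtd : Ltd = ε⁻¹ ^ d * Ntd)
    (hNLt : NLt = ε⁻¹ ^ (d - 1) * Ntd)
    (hNtd : Ntd ≠ 0)
    (Nef : A → Prop) (hNef : Nef N)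
    (hNefDeg : ∀ x : A, Nef x → 0 ≤ deg (x ^ (d + 1))) :
    deg ((((d : ℝ) + 1) • (L ^ d * N)) - (((d : ℝ) * NLt / Ltd) • L ^ (d + 1)))
        = ε⁻¹ ^ d * deg (N ^ (d + 1))
      ∧ 0 ≤ deg ((((d : ℝ) + 1) • (L ^ d * N)) - (((d : ℝ) * NLt / Ltd) • L ^ (d + 1))) := by
  have hε0 : ε ≠ 0 := ne_of_gt hε
  have hratio : (d : ℝ) * NLt / Ltd = (d : ℝ) * ε := by
    rw [hNLt, hLtd]
    have : ε⁻¹ ^ d = ε⁻¹ ^ (d - 1) * ε⁻¹ := by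
      rw [← pow_succ, Nat.sub_add_cancel hd]
    rw [this]
    field_simp
  have hkey : (((d : ℝ) + 1) • (L ^ d * N)) - (((d : ℝ) * NLt / Ltd) • L ^ (d + 1))
      = ε⁻¹ ^ d • N ^ (d + 1) := by
    rw [hratio, hL]
    exact key d hd ε⁻¹ ε (mul_inv_cancel₀ hε0) N F hF
  rw [hkey, map_smul, smul_eq_mul]
  refine ⟨rfl, ?_⟩
  have h1 : (0:ℝ) ≤ ε⁻¹ ^ d := by positivity
  exact mul_nonneg h1 (hNefDeg N hNef)
end

section
/- Let (X, D) be a klt log Calabi–Yau pair with X a Q-Fano variety of dimension d (so K_X + D ∼_Q 0 and −K_X ample). Suppose there exists δ > 0 such that for every prime divisor E over X, A_{X,D}(E) ≥ δ·T(E), where T(E) is the pseudo-effective threshold of E with respect to −K_X. Then for every rational 0 < a < δ/2 and every prime divisor E over X, one has β_{X,(1−a)D}(E) = A_{X,(1−a)D}(E) − a·S_X(E) ≥ (δ/2)·T(E) > 0; in particular (X, (1−a)D) is uniformly K-stable. -/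
/-- Let `(X, D)` be a klt log Calabi–Yau pair with `X` a ℚ-Fano variety of
dimension `d`.  Suppose `δ > 0` is such that `A_{X,D}(E) ≥ δ·T(E)` for every prime divisor `E`
over `X`, where `T(E)` is the pseudo-effective threshold of `E` with respect to `−K_X`.  Then
for every rational `0 < a < δ/2` and every `E`,
`β_{X,(1−a)D}(E) = A_{X,(1−a)D}(E) − a·S_X(E) ≥ (δ/2)·T(E) > 0`, where
`A_{X,(1−a)D}(E) = A_{X,D}(E) + a·ord_E(D)`; in particular `(X, (1−a)D)` is uniformly
K-stable: there is `ε > 0` with `β_{X,(1−a)D}(E) ≥ ε·S_{X,(1−a)D}(E) = ε·(a·S_X(E))` for all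
`E`. -/
theorem stmt_10
    (XYIsQFanoOfDim PairIskltLogCalabiYau : Prop)
    (hFano : XYIsQFanoOfDim) (hCY : PairIskltLogCalabiYau)
    (E : Type*)               -- the prime divisors over X
    (A S T ordD : E → ℝ)      -- A_{X,D}(·), S_X(·), T(·), ord_·(D)
    (δ : ℝ) (hδ : 0 < δ)
    (hordD : ∀ e, 0 ≤ ordD e)
    (hT : ∀ e, 0 < T e)
    (hSpos : ∀ e, 0 < S e)
    (hST : ∀ e, S e ≤ T e)    -- S_X(E) ≤ T(E) always
    (hA : ∀ e, δ * T e ≤ A e) -- the lct bound A_{X,D}(E) ≥ δ·T(E)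
    (a : ℚ) (ha0 : 0 < a) (ha : (a : ℝ) < δ / 2) :
    (∀ e, (δ / 2) * T e ≤ (A e + (a : ℝ) * ordD e) - (a : ℝ) * S e
        ∧ 0 < (A e + (a : ℝ) * ordD e) - (a : ℝ) * S e)
    ∧ ∃ εK : ℝ, 0 < εK ∧
        ∀ e, εK * ((a : ℝ) * S e) ≤ (A e + (a : ℝ) * ordD e) - (a : ℝ) * S e := by
  have ha0' : (0 : ℝ) < (a : ℝ) := by exact_mod_cast ha0
  have key : ∀ e, (δ / 2) * T e ≤ (A e + (a : ℝ) * ordD e) - (a : ℝ) * S e := by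
    intro e
    have h1 : (a : ℝ) * S e ≤ (a : ℝ) * T e := by
      exact mul_le_mul_of_nonneg_left (hST e) ha0'.le
    have h2 : (a : ℝ) * T e ≤ (δ / 2) * T e := by
      exact mul_le_mul_of_nonneg_right ha.le (hT e).le
    have h3 : 0 ≤ (a : ℝ) * ordD e := mul_nonneg ha0'.le (hordD e)
    nlinarith [hA e, hT e]
  refine ⟨fun e => ⟨key e, lt_of_lt_of_le (mul_pos (by linarith) (hT e)) (key e)⟩, 1, one_pos, fun e => ?_⟩
  have h1 : (a : ℝ) * S e ≤ (a : ℝ) * T e :=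
    mul_le_mul_of_nonneg_left (hST e) ha0'.le
  have h2 : (a : ℝ) * T e ≤ (δ / 2) * T e :=
    mul_le_mul_of_nonneg_right ha.le (hT e).le
  have := key e
  linarith
end
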